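/- arXiv:2604.17703 — 14 statements merged into one kernel-verified Lean document; each statement's English description precedes it below -/
import Mathlib

section
/- Conditional deontic explosion from 5(b),(e),(f): Let W be a finite set and ob : Set W → Set (Set W) satisfy axioms 5(b), 5(e), 5(f). Suppose A, B, C, D are pairwise disjoint nonempty subsets of W, A ∈ ob(A ∪ B), and C ∈ ob(C ∪ D). Then C ∈ ob(B ∪ C ∪ D). -/
/-! `A ∪ C` agrees with `A` on `A ∪ B` and with `C` on `C ∪ D`, so by 5(b) and 5(f) it is
obligatory on `A ∪ B ∪ C ∪ D`. By 5(e) it stays obligatory on `B ∪ C ∪ D`, where it agrees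
with `C`. -/

section Obligation

variable {W : Type*} (ob : Set W → Set (Set W))
  (h5b : ∀ X Y Z : Set W, Y ∩ X = Z ∩ X → (Y ∈ ob X ↔ Z ∈ ob X))

include h5b in
theorem mem_ob_union_of_inter_eq
    (h5f : ∀ X Y Z : Set W, X ∈ ob Y → X ∈ ob Z → X ∈ ob (Y ∪ Z))
    {X Y P Q Z : Set W} (hP : P ∈ ob X) (hQ : Q ∈ ob Y)
    (hZX : Z ∩ X = P ∩ X) (hZY : Z ∩ Y = Q ∩ Y) : Z ∈ ob (X ∪ Y) :=
  h5f Z X Y ((h5b X Z P hZX).2 hP) ((h5b Y Z Q hZY).2 hQ)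

include h5b in
theorem mem_ob_of_subset_of_inter_eq
    (h5e : ∀ X Y Z : Set W, Y ⊆ X → Z ∈ ob X → Y ∩ Z ≠ ∅ → Z ∈ ob Y)
    {X Y Z Q : Set W} (hZ : Z ∈ ob X) (hYX : Y ⊆ X) (hYZ : (Y ∩ Z).Nonempty)
    (hZY : Z ∩ Y = Q ∩ Y) : Q ∈ ob Y :=
  (h5b Y Z Q hZY).1 (h5e X Y Z hYX hZ hYZ.ne_empty)

end Obligation

theorem stmt0_general {W : Type*} (ob : Set W → Set (Set W))
    (h5b : ∀ X Y Z : Set W, Y ∩ X = Z ∩ X → (Y ∈ ob X ↔ Z ∈ ob X))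
    (h5e : ∀ X Y Z : Set W, Y ⊆ X → Z ∈ ob X → Y ∩ Z ≠ ∅ → Z ∈ ob Y)
    (h5f : ∀ X Y Z : Set W, X ∈ ob Y → X ∈ ob Z → X ∈ ob (Y ∪ Z))
    (A B C D : Set W)
    (hC : C ≠ ∅)
    (hAB : A ∩ B = ∅) (hAD : A ∩ D = ∅)
    (hBC : B ∩ C = ∅)
    (hobA : A ∈ ob (A ∪ B)) (hobC : C ∈ ob (C ∪ D)) :
    C ∈ ob (B ∪ C ∪ D) := by
  have hAB' := Set.eq_empty_iff_forall_notMem.1 hAB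
  have hAD' := Set.eq_empty_iff_forall_notMem.1 hAD
  have hBC' := Set.eq_empty_iff_forall_notMem.1 hBC
  have hAC_ob : A ∪ C ∈ ob ((A ∪ B) ∪ (C ∪ D)) := by
    refine mem_ob_union_of_inter_eq ob h5b h5f hobA hobC ?_ ?_ <;> ext x
    · have := hBC' x; simp only [Set.mem_inter_iff, Set.mem_union] at *; tauto
    · have := hAD' x; simp only [Set.mem_inter_iff, Set.mem_union] at *; tauto
  obtain ⟨c, hc⟩ := Set.nonempty_iff_ne_empty.2 hC
  refine mem_ob_of_subset_of_inter_eq ob h5b h5e hAC_ob ?_ ⟨c, by simp [hc], by simp [hc]⟩ ?_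
  · intro x; simp only [Set.mem_union]; tauto
  · ext x
    have := hAB' x; have := hAD' x
    simp only [Set.mem_inter_iff, Set.mem_union] at *; tauto

theorem stmt0 {W : Type*} [Fintype W] (ob : Set W → Set (Set W))
    (h5b : ∀ X Y Z : Set W, Y ∩ X = Z ∩ X → (Y ∈ ob X ↔ Z ∈ ob X))
    (h5e : ∀ X Y Z : Set W, Y ⊆ X → Z ∈ ob X → Y ∩ Z ≠ ∅ → Z ∈ ob Y)
    (h5f : ∀ X Y Z : Set W, X ∈ ob Y → X ∈ ob Z → X ∈ ob (Y ∪ Z))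
    (A B C D : Set W)
    (hA : A ≠ ∅) (hB : B ≠ ∅) (hC : C ≠ ∅) (hD : D ≠ ∅)
    (hAB : A ∩ B = ∅) (hAC : A ∩ C = ∅) (hAD : A ∩ D = ∅)
    (hBC : B ∩ C = ∅) (hBD : B ∩ D = ∅) (hCD : C ∩ D = ∅)
    (hobA : A ∈ ob (A ∪ B)) (hobC : C ∈ ob (C ∪ D)) :
    C ∈ ob (B ∪ C ∪ D) :=
  stmt0_general ob h5b h5e h5f A B C D hC hAB hAD hBC hobA hobC
end

section
/- Conditional explosion: If ob satisfies axioms 5(a), 5(b), 5(d), 5(e), then for all subsets A, B, C of W, if A ∈ ob(C) and B ∩ Aᶜ ∩ C ≠ ∅ then B ∈ ob(Aᶜ ∩ C). -/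
/-! Under these axioms `ob X` is upward closed: to enlarge an obligation `Y` to `Z ⊇ Y`,
restrict (5e) to the context `X₀` obtained from `X` by removing the worlds of `Z \ Y`, then
re-expand (5d) from `X₀` back to `X`, which adds exactly those worlds to the obligation.
Hence `A ∪ B ∈ ob C`, and restricting (5e) to `Aᶜ ∩ C`, where `A ∪ B` and `B` agree,
gives `B ∈ ob (Aᶜ ∩ C)`. -/

open Set

namespace Obligation

variable {W : Type*} {ob : Set W → Set (Set W)}

theorem inter_ne_empty_of_mem (h5a : ∀ X : Set W, ∅ ∉ ob X)
    (h5b : ∀ X Y Z : Set W, Y ∩ X = Z ∩ X → (Y ∈ ob X ↔ Z ∈ ob X))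
    {X Y : Set W} (hY : Y ∈ ob X) : Y ∩ X ≠ ∅ := fun h ↦
  h5a X ((h5b X Y ∅ (by rw [h, empty_inter])).mp hY)

theorem mem_of_subset (h5a : ∀ X : Set W, ∅ ∉ ob X)
    (h5b : ∀ X Y Z : Set W, Y ∩ X = Z ∩ X → (Y ∈ ob X ↔ Z ∈ ob X))
    (h5d : ∀ X Y Z : Set W, Y ⊆ X → X ⊆ Z → Y ∈ ob X → (Z \ X) ∪ Y ∈ ob Z)
    (h5e : ∀ X Y Z : Set W, Y ⊆ X → Z ∈ ob X → Y ∩ Z ≠ ∅ → Z ∈ ob Y)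
    {X Y Z : Set W} (hY : Y ∈ ob X) (hYZ : Y ⊆ Z) : Z ∈ ob X := by
  set X₀ := X \ (Z \ Y)
  have hX₀Y : X₀ ∩ Y = Y ∩ X := by
    ext x; simp only [X₀, mem_inter_iff, mem_sdiff]; tauto
  have hY₀ : Y ∈ ob X₀ := h5e X X₀ Y sdiff_subset hY
    (hX₀Y ▸ inter_ne_empty_of_mem h5a h5b hY)
  have hYX₀ : Y ∩ X ∈ ob X₀ :=
    (h5b X₀ Y (Y ∩ X) (by rw [inter_assoc, inter_eq_right.mpr sdiff_subset])).mp hY₀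
  have hexp := h5d X₀ (Y ∩ X) X (hX₀Y ▸ inter_subset_left) sdiff_subset hYX₀
  refine (h5b X _ Z ?_).mp hexp
  ext x; simp only [X₀, mem_inter_iff, mem_union, mem_sdiff]
  have := @hYZ x; tauto

end Obligation

theorem stmt1_general {W : Type*} (ob : Set W → Set (Set W))
    (h5a : ∀ X : Set W, ∅ ∉ ob X)
    (h5b : ∀ X Y Z : Set W, Y ∩ X = Z ∩ X → (Y ∈ ob X ↔ Z ∈ ob X))
    (h5d : ∀ X Y Z : Set W, Y ⊆ X → X ⊆ Z → Y ∈ ob X → (Z \ X) ∪ Y ∈ ob Z)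
    (h5e : ∀ X Y Z : Set W, Y ⊆ X → Z ∈ ob X → Y ∩ Z ≠ ∅ → Z ∈ ob Y) :
    ∀ A B C : Set W, A ∈ ob C → B ∩ Aᶜ ∩ C ≠ ∅ → B ∈ ob (Aᶜ ∩ C) := by
  intro A B C hA hB
  have hAB : A ∪ B ∈ ob C := Obligation.mem_of_subset h5a h5b h5d h5e hA subset_union_left
  have hrestrict : (A ∪ B) ∩ (Aᶜ ∩ C) = B ∩ (Aᶜ ∩ C) := by
    rw [← inter_assoc, union_inter_distrib_right, inter_compl_self, empty_union, inter_assoc]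
  have hAB' : A ∪ B ∈ ob (Aᶜ ∩ C) := h5e C _ _ inter_subset_right hAB
    (by rwa [inter_comm, hrestrict, ← inter_assoc])
  exact (h5b _ _ _ hrestrict).mp hAB'

theorem stmt1 {W : Type*} [Fintype W] (ob : Set W → Set (Set W))
    (h5a : ∀ X : Set W, ∅ ∉ ob X)
    (h5b : ∀ X Y Z : Set W, Y ∩ X = Z ∩ X → (Y ∈ ob X ↔ Z ∈ ob X))
    (h5d : ∀ X Y Z : Set W, Y ⊆ X → X ⊆ Z → Y ∈ ob X → (Z \ X) ∪ Y ∈ ob Z)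
    (h5e : ∀ X Y Z : Set W, Y ⊆ X → Z ∈ ob X → Y ∩ Z ≠ ∅ → Z ∈ ob Y) :
    ∀ A B C : Set W, A ∈ ob C → B ∩ Aᶜ ∩ C ≠ ∅ → B ∈ ob (Aᶜ ∩ C) :=
  stmt1_general ob h5a h5b h5d h5e
end

section
/- Classification of models of CJ97: Let W be a finite type and ob : Set W → Set (Set W). Then ob satisfies axioms 5(a), 5(b), 5(c) (strong), 5(d), 5(e) if and only if one of the following holds: (i) ob X = ∅ for all X; (ii) ob X = {Y | X ≠ ∅ ∧ X ⊆ Y} for all X; or (iii) there exists a world a such that for all X, ob X = {Y | X ∩ Y ≠ ∅ ∧ X \ {a} ⊆ Y}. -/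
/-!
Moving an obligation from a context `X` up to the whole space (axiom (d)) and back down (axiom (e))
shows that `ob` is determined by `ob univ`. By finiteness and (c), `ob univ` is the set of supersets
of a least set `B`, and then `ob X = {Y | X ∩ Y ≠ ∅ ∧ X \ A ⊆ Y}` where `A = Bᶜ`. A family of
this shape satisfies (c) exactly when `A` has at most one world.
-/

open Set

section

variable {W : Type*}

structure IsCJ97Model (ob : Set W → Set (Set W)) : Prop where
  empty_not_mem : ∀ X : Set W, ∅ ∉ ob X
  mem_congr : ∀ X Y Z : Set W, Y ∩ X = Z ∩ X → (Y ∈ ob X ↔ Z ∈ ob X)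
  inter_mem : ∀ X Y Z : Set W, Y ∈ ob X → Z ∈ ob X → Y ∩ Z ∈ ob X
  diff_union_mem : ∀ X Y Z : Set W, Y ⊆ X → X ⊆ Z → Y ∈ ob X → (Z \ X) ∪ Y ∈ ob Z
  mem_of_subset : ∀ X Y Z : Set W, Y ⊆ X → Z ∈ ob X → Y ∩ Z ≠ ∅ → Z ∈ ob Y

-- `obExcept ∅` and `obExcept {a}` are the models (ii) and (iii).
def obExcept (A : Set W) (X : Set W) : Set (Set W) :=
  {Y | X ∩ Y ≠ ∅ ∧ X \ A ⊆ Y}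

theorem obExcept_empty (X : Set W) : obExcept ∅ X = {Y | X ≠ ∅ ∧ X ⊆ Y} := by
  ext Y
  simp only [obExcept, sdiff_empty, mem_ofPred_eq, and_congr_left_iff]
  intro hXY
  rw [inter_eq_left.2 hXY]

theorem isCJ97Model_const_empty : IsCJ97Model fun _ : Set W => (∅ : Set (Set W)) :=
  ⟨by simp, by simp, by simp, by simp, by simp⟩

theorem isCJ97Model_obExcept {A : Set W} (hA : A.Subsingleton) : IsCJ97Model (obExcept A) := by
  refine ⟨fun X h => h.1 (inter_empty X), ?_, ?_, ?_, ?_⟩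
  · intro X Y Z hYZ
    have hrestrict : ∀ V : Set W, X \ A ⊆ V ↔ X \ A ⊆ V ∩ X := fun V => by
      simp [subset_inter_iff]
    simp only [obExcept, mem_ofPred_eq, inter_comm X, hrestrict Y, hrestrict Z, hYZ]
  · rintro X Y Z ⟨hY, hYA⟩ ⟨hZ, hZA⟩
    refine ⟨?_, subset_inter hYA hZA⟩
    obtain ⟨u, huX, huY⟩ := nonempty_iff_ne_empty.2 hY
    obtain ⟨v, hvX, hvZ⟩ := nonempty_iff_ne_empty.2 hZ
    -- a witness outside `A` lies in both `Y` and `Z`; witnesses inside `A` coincide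
    by_cases huA : u ∈ A
    · by_cases hvA : v ∈ A
      · obtain rfl := hA huA hvA
        exact nonempty_iff_ne_empty.1 ⟨u, huX, huY, hvZ⟩
      · exact nonempty_iff_ne_empty.1 ⟨v, hvX, hYA ⟨hvX, hvA⟩, hvZ⟩
    · exact nonempty_iff_ne_empty.1 ⟨u, huX, huY, hZA ⟨huX, huA⟩⟩
  · rintro X Y Z hYX hXZ ⟨hY, hYA⟩
    refine ⟨?_, ?_⟩
    · obtain ⟨w, hwX, hwY⟩ := nonempty_iff_ne_empty.2 hY
      exact nonempty_iff_ne_empty.1 ⟨w, hXZ hwX, Or.inr hwY⟩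
    · rintro w ⟨hwZ, hwA⟩
      by_cases hwX : w ∈ X
      · exact Or.inr (hYA ⟨hwX, hwA⟩)
      · exact Or.inl ⟨hwZ, hwX⟩
  · rintro X Y Z hYX ⟨-, hZA⟩ hYZ
    exact ⟨hYZ, (sdiff_subset_sdiff_left hYX).trans hZA⟩

theorem isCJ97Model_obExcept_iff {A : Set W} : IsCJ97Model (obExcept A) ↔ A.Subsingleton := by
  refine ⟨fun h a ha b hb => ?_, isCJ97Model_obExcept⟩
  have hsingleton : ∀ c ∈ A, {c} ∈ obExcept A A := fun c hc =>
    ⟨(inter_singleton_nonempty.2 hc).ne_empty, by simp⟩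
  have hab := (h.inter_mem A _ _ (hsingleton a ha) (hsingleton b hb)).1
  contrapose! hab
  simp [hab]

namespace IsCJ97Model

variable {ob : Set W → Set (Set W)} (h : IsCJ97Model ob) {X Y : Set W}
include h

theorem inter_mem_iff : Y ∩ X ∈ ob X ↔ Y ∈ ob X :=
  h.mem_congr X _ _ (by rw [inter_assoc, inter_self])

theorem inter_nonempty (hY : Y ∈ ob X) : (X ∩ Y).Nonempty := by
  rw [nonempty_iff_ne_empty, inter_comm]
  intro hempty
  exact h.empty_not_mem X ((h.mem_congr X _ _ (by rw [hempty, empty_inter])).1 hY)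

theorem mem_of_inter_subset {M : Set W} (hM : M ∈ ob X) (hMY : X ∩ M ⊆ Y) : Y ∈ ob X := by
  have hM' : X ∩ M ∈ ob X := by rw [inter_comm]; exact h.inter_mem_iff.2 hM
  set M' := X ∩ M
  -- (e) makes `M'` an obligation in the intermediate context `Z`, and (d) extends it to `X ∩ Y`.
  set Z := (X \ Y) ∪ M'
  have hZX : Z ⊆ X := union_subset sdiff_subset inter_subset_left
  have hMZ : M' ∈ ob Z := h.mem_of_subset X Z M' hZX hM' <| by
    rw [inter_eq_right.2 subset_union_right]
    exact (h.inter_nonempty hM).ne_empty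
  have hXZ : (X \ Z) ∪ M' = Y ∩ X := by
    ext w
    have := @hMY w
    simp only [Z, M', mem_union, mem_sdiff, mem_inter_iff]
    tauto
  exact h.inter_mem_iff.1 (hXZ ▸ h.diff_union_mem Z M' X subset_union_right hZX hMZ)

theorem compl_union_inter_mem_univ (hY : Y ∈ ob X) : Xᶜ ∪ Y ∩ X ∈ ob univ := by
  simpa only [compl_eq_univ_sdiff] using
    h.diff_union_mem X (Y ∩ X) univ inter_subset_right (subset_univ X) (h.inter_mem_iff.2 hY)

theorem eq_empty_of_univ_eq_empty (hu : ob univ = ∅) (X : Set W) : ob X = ∅ :=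
  eq_empty_of_forall_notMem fun _ hY =>
    (hu ▸ h.compl_union_inter_mem_univ hY : _ ∈ (∅ : Set (Set W)))

theorem exists_mem_univ_iff_superset [Finite W] (hne : (ob univ).Nonempty) :
    ∃ B : Set W, ∀ Y, Y ∈ ob univ ↔ B ⊆ Y := by
  obtain ⟨B, hB, hBmin⟩ := (toFinite (ob univ)).exists_minimal hne
  refine ⟨B, fun Y => ⟨fun hY => ?_, fun hBY => h.mem_of_inter_subset hB (by simpa using hBY)⟩⟩
  exact (hBmin (h.inter_mem univ B Y hB hY) inter_subset_left).trans inter_subset_right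

theorem eq_obExcept [Finite W] (hne : (ob univ).Nonempty) : ∃ A : Set W, ob = obExcept A := by
  obtain ⟨B, hB⟩ := h.exists_mem_univ_iff_superset hne
  refine ⟨Bᶜ, funext fun X => Set.ext fun Y => ⟨fun hY => ?_, fun ⟨hXY, hXB⟩ => ?_⟩⟩
  · refine ⟨(h.inter_nonempty hY).ne_empty, ?_⟩
    rintro w ⟨hwX, hwB⟩
    simpa [hwX] using (hB _).1 (h.compl_union_inter_mem_univ hY) (not_not.1 hwB)
  · have hBY : B ∪ Y ∈ ob X := by
      refine h.mem_of_subset univ X _ (subset_univ X) ((hB _).2 subset_union_left) ?_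
      exact nonempty_iff_ne_empty.1 <|
        (nonempty_iff_ne_empty.2 hXY).mono (inter_subset_inter_right X subset_union_right)
    refine h.mem_of_inter_subset hBY ?_
    rw [inter_union_distrib_left]
    exact union_subset (sdiff_compl ▸ hXB) inter_subset_right

end IsCJ97Model

end

theorem stmt2 {W : Type*} [Fintype W] (ob : Set W → Set (Set W)) :
    ((∀ X : Set W, ∅ ∉ ob X) ∧
     (∀ X Y Z : Set W, Y ∩ X = Z ∩ X → (Y ∈ ob X ↔ Z ∈ ob X)) ∧
     (∀ X Y Z : Set W, Y ∈ ob X → Z ∈ ob X → Y ∩ Z ∈ ob X) ∧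
     (∀ X Y Z : Set W, Y ⊆ X → X ⊆ Z → Y ∈ ob X → (Z \ X) ∪ Y ∈ ob Z) ∧
     (∀ X Y Z : Set W, Y ⊆ X → Z ∈ ob X → Y ∩ Z ≠ ∅ → Z ∈ ob Y)) ↔
    ((∀ X : Set W, ob X = ∅) ∨
     (∀ X : Set W, ob X = {Y | X ≠ ∅ ∧ X ⊆ Y}) ∨
     (∃ a : W, ∀ X : Set W, ob X = {Y | X ∩ Y ≠ ∅ ∧ X \ {a} ⊆ Y})) := by
  refine Iff.trans ⟨fun ⟨ha, hb, hc, hd, he⟩ => (⟨ha, hb, hc, hd, he⟩ : IsCJ97Model ob),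
    fun ⟨ha, hb, hc, hd, he⟩ => ⟨ha, hb, hc, hd, he⟩⟩ ?_
  constructor
  · intro h
    rcases (ob univ).eq_empty_or_nonempty with hu | hne
    · exact Or.inl (h.eq_empty_of_univ_eq_empty hu)
    obtain ⟨A, rfl⟩ := h.eq_obExcept hne
    rcases (isCJ97Model_obExcept_iff.1 h).eq_empty_or_singleton with rfl | ⟨a, rfl⟩
    · exact Or.inr (Or.inl obExcept_empty)
    · exact Or.inr (Or.inr ⟨a, fun _ => rfl⟩)
  · rintro (h | h | ⟨a, h⟩)
    · rw [show ob = _ from funext h]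
      exact isCJ97Model_const_empty
    · rw [show ob = obExcept ∅ from funext fun X => (h X).trans (obExcept_empty X).symm]
      exact isCJ97Model_obExcept subsingleton_empty
    · rw [show ob = obExcept {a} from funext h]
      exact isCJ97Model_obExcept subsingleton_singleton
end

section
/- Assume ob satisfies 5(d), 5(e), and 5(c⁻). If a₁ ≠ a₂, a₁ ∉ A, a₂ ∉ A, {a₁, a₂} ∈ ob {a₁, a₂}, and A ∈ ob X for every X with A ⊆ X, then {a₁} ∈ ob {a₁, a₂} and {a₂} ∈ ob {a₁, a₂}. -/
/-!
Fix `b ≠ c` outside `A`. Since `A` is obligatory in `A ∪ {b}`, axiom 5(d) makes `A ∪ {c}`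
obligatory in `A ∪ {b, c}`; by 5(e) it stays obligatory in the smaller context `{b, c}`, which
it meets in `c`. Intersecting with the obligatory `{b, c}` by 5(c⁻) leaves `{c}`. Apply this
with `(b, c) = (a₁, a₂)` and `(a₂, a₁)`.
-/

section

variable {W : Type*}

def Axiom5cMinus (ob : Set W → Set (Set W)) : Prop :=
  ∀ X Y Z : Set W, Y ∈ ob X → Z ∈ ob X → X ∩ Y ∩ Z ≠ ∅ → Y ∩ Z ∈ ob X

def Axiom5d (ob : Set W → Set (Set W)) : Prop :=
  ∀ X Y Z : Set W, Y ⊆ X → X ⊆ Z → Y ∈ ob X → (Z \ X) ∪ Y ∈ ob Z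

def Axiom5e (ob : Set W → Set (Set W)) : Prop :=
  ∀ X Y Z : Set W, Y ⊆ X → Z ∈ ob X → Y ∩ Z ≠ ∅ → Z ∈ ob Y

namespace Set

lemma union_pair_diff_union_singleton_union {A : Set W} {b c : W} (hc : c ∉ A) (hbc : b ≠ c) :
    (A ∪ {b, c}) \ (A ∪ {b}) ∪ A = A ∪ {c} := by
  ext x
  by_cases hx : x = c
  · subst hx; simp [hc, hbc.symm]
  · simp only [mem_union, mem_sdiff, mem_insert_iff, mem_singleton_iff, hx]
    tauto

lemma pair_inter_union_singleton {A : Set W} {b c : W} (hb : b ∉ A) (hbc : b ≠ c) :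
    ({b, c} : Set W) ∩ (A ∪ {c}) = {c} := by
  ext x
  by_cases hx : x = b
  · subst hx; simp [hb, hbc]
  · simp only [mem_inter_iff, mem_insert_iff, mem_singleton_iff, mem_union, hx]
    tauto

end Set

variable {ob : Set W → Set (Set W)}

lemma Axiom5d.union_singleton_mem_ob (h5d : Axiom5d ob) {A : Set W} {b c : W}
    (hc : c ∉ A) (hbc : b ≠ c) (hA : A ∈ ob (A ∪ {b})) :
    A ∪ {c} ∈ ob (A ∪ {b, c}) := by
  have h := h5d (A ∪ {b}) A (A ∪ {b, c}) Set.subset_union_left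
    (Set.union_subset_union_right A (by simp)) hA
  rwa [Set.union_pair_diff_union_singleton_union hc hbc] at h

lemma singleton_mem_ob_pair (h5cm : Axiom5cMinus ob) (h5d : Axiom5d ob) (h5e : Axiom5e ob)
    {A : Set W} {b c : W} (hbc : b ≠ c) (hb : b ∉ A) (hc : c ∉ A)
    (hpair : ({b, c} : Set W) ∈ ob {b, c}) (hA : A ∈ ob (A ∪ {b})) :
    ({c} : Set W) ∈ ob {b, c} := by
  have hmeet : ({b, c} : Set W) ∩ (A ∪ {c}) = {c} := Set.pair_inter_union_singleton hb hbc
  have hlarge : A ∪ {c} ∈ ob (A ∪ {b, c}) := h5d.union_singleton_mem_ob hc hbc hA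
  have hsmall : A ∪ {c} ∈ ob {b, c} :=
    h5e _ _ _ Set.subset_union_right hlarge (by rw [hmeet]; exact Set.singleton_ne_empty c)
  have h := h5cm _ _ _ hpair hsmall
    (by rw [Set.inter_self, hmeet]; exact Set.singleton_ne_empty c)
  rwa [hmeet] at h

end

theorem stmt6_general {W : Type*} (ob : Set W → Set (Set W)) (A : Set W) (a₁ a₂ : W)
    (h5cm : ∀ X Y Z : Set W, Y ∈ ob X → Z ∈ ob X → X ∩ Y ∩ Z ≠ ∅ → Y ∩ Z ∈ ob X)
    (h5d : ∀ X Y Z : Set W, Y ⊆ X → X ⊆ Z → Y ∈ ob X → (Z \ X) ∪ Y ∈ ob Z)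
    (h5e : ∀ X Y Z : Set W, Y ⊆ X → Z ∈ ob X → Y ∩ Z ≠ ∅ → Z ∈ ob Y)
    (hne : a₁ ≠ a₂) (h1 : a₁ ∉ A) (h2 : a₂ ∉ A)
    (hpair : ({a₁, a₂} : Set W) ∈ ob {a₁, a₂})
    (hA : ∀ X : Set W, A ⊆ X → A ∈ ob X) :
    ({a₁} : Set W) ∈ ob {a₁, a₂} ∧ ({a₂} : Set W) ∈ ob {a₁, a₂} := by
  have hpair' : ({a₂, a₁} : Set W) ∈ ob {a₂, a₁} := by rwa [Set.pair_comm]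
  constructor
  · simpa only [Set.pair_comm] using
      singleton_mem_ob_pair h5cm h5d h5e hne.symm h2 h1 hpair' (hA _ Set.subset_union_left)
  · exact singleton_mem_ob_pair h5cm h5d h5e hne h1 h2 hpair (hA _ Set.subset_union_left)

theorem stmt6 {W : Type*} [Fintype W] (ob : Set W → Set (Set W)) (A : Set W) (a₁ a₂ : W)
    (h5cm : ∀ X Y Z : Set W, Y ∈ ob X → Z ∈ ob X → X ∩ Y ∩ Z ≠ ∅ → Y ∩ Z ∈ ob X)
    (h5d : ∀ X Y Z : Set W, Y ⊆ X → X ⊆ Z → Y ∈ ob X → (Z \ X) ∪ Y ∈ ob Z)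
    (h5e : ∀ X Y Z : Set W, Y ⊆ X → Z ∈ ob X → Y ∩ Z ≠ ∅ → Z ∈ ob Y)
    (hne : a₁ ≠ a₂) (h1 : a₁ ∉ A) (h2 : a₂ ∉ A)
    (hpair : ({a₁, a₂} : Set W) ∈ ob {a₁, a₂})
    (hA : ∀ X : Set W, A ⊆ X → A ∈ ob X) :
    ({a₁} : Set W) ∈ ob {a₁, a₂} ∧ ({a₂} : Set W) ∈ ob {a₁, a₂} :=
  stmt6_general ob A a₁ a₂ h5cm h5d h5e hne h1 h2 hpair hA
end

section
/- Assume ob satisfies axioms 5(a), 5(c) (strong), 5(d), 5(e). If a₁ ≠ a₂, a₁ ∉ A, a₂ ∉ A, and {a₁, a₂} ∈ ob {a₁, a₂}, then it is not the case that A ∈ ob X for every X with A ⊆ X. -/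
/-!
If `A` were obligatory in every superset, it would be obligatory in `A ∪ {a₁}` and in `A ∪ {a₂}`.
Enlarging both contexts to `A ∪ {a₁, a₂}` (axiom 5(d)) and then restricting to `{a₁, a₂}`
(axiom 5(e)) makes `A ∪ {a₂}` and `A ∪ {a₁}` obligatory in `{a₁, a₂}`, as is `{a₁, a₂}` itself.
By 5(c) so is their intersection, which is empty, contradicting 5(a).
-/

namespace Obligation

variable {W : Type*} {ob : Set W → Set (Set W)}

theorem union_diff_mem_of_mem
    (h5d : ∀ X Y Z : Set W, Y ⊆ X → X ⊆ Z → Y ∈ ob X → (Z \ X) ∪ Y ∈ ob Z)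
    (h5e : ∀ X Y Z : Set W, Y ⊆ X → Z ∈ ob X → Y ∩ Z ≠ ∅ → Z ∈ ob Y)
    {X Y Z V : Set W} (hYX : Y ⊆ X) (hXZ : X ⊆ Z) (hVZ : V ⊆ Z) (hY : Y ∈ ob X)
    (hV : (V ∩ ((Z \ X) ∪ Y)).Nonempty) : (Z \ X) ∪ Y ∈ ob V :=
  h5e Z V _ hVZ (h5d X Y Z hYX hXZ hY) hV.ne_empty

theorem insert_mem_pair_of_mem_insert
    (h5d : ∀ X Y Z : Set W, Y ⊆ X → X ⊆ Z → Y ∈ ob X → (Z \ X) ∪ Y ∈ ob Z)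
    (h5e : ∀ X Y Z : Set W, Y ⊆ X → Z ∈ ob X → Y ∩ Z ≠ ∅ → Z ∈ ob Y)
    {A : Set W} {a b : W} (hab : a ≠ b) (hA : A ∈ ob (insert a A)) :
    insert b A ∈ ob {a, b} := by
  have hunion : (insert a (insert b A) \ insert a A) ∪ A = insert b A := by
    ext x
    simp only [Set.mem_union, Set.mem_sdiff, Set.mem_insert_iff]
    grind
  have hmem := union_diff_mem_of_mem (V := {a, b}) h5d h5e (Set.subset_insert a A)
    (Set.insert_subset_insert (Set.subset_insert b A))
    (Set.insert_subset_insert (Set.singleton_subset_iff.mpr (Set.mem_insert b A)))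
    hA (by rw [hunion]; exact ⟨b, by simp, Set.mem_insert b A⟩)
  rwa [hunion] at hmem

end Obligation

open Obligation in
theorem stmt7_general {W : Type*} (ob : Set W → Set (Set W)) (A : Set W) (a₁ a₂ : W)
    (h5a : ∀ X : Set W, ∅ ∉ ob X)
    (h5c : ∀ X Y Z : Set W, Y ∈ ob X → Z ∈ ob X → Y ∩ Z ∈ ob X)
    (h5d : ∀ X Y Z : Set W, Y ⊆ X → X ⊆ Z → Y ∈ ob X → (Z \ X) ∪ Y ∈ ob Z)
    (h5e : ∀ X Y Z : Set W, Y ⊆ X → Z ∈ ob X → Y ∩ Z ≠ ∅ → Z ∈ ob Y)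
    (hne : a₁ ≠ a₂) (h1 : a₁ ∉ A) (h2 : a₂ ∉ A)
    (hpair : ({a₁, a₂} : Set W) ∈ ob {a₁, a₂}) :
    ¬ (∀ X : Set W, A ⊆ X → A ∈ ob X) := by
  intro h
  have hA₂ : insert a₂ A ∈ ob {a₁, a₂} :=
    insert_mem_pair_of_mem_insert h5d h5e hne (h _ (Set.subset_insert a₁ A))
  have hA₁ : insert a₁ A ∈ ob {a₁, a₂} := Set.pair_comm a₁ a₂ ▸
    insert_mem_pair_of_mem_insert h5d h5e hne.symm (h _ (Set.subset_insert a₂ A))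
  have hempty : insert a₂ A ∩ insert a₁ A ∩ {a₁, a₂} = ∅ := by
    ext x
    simp only [Set.mem_inter_iff, Set.mem_insert_iff, Set.mem_singleton_iff,
      Set.mem_empty_iff_false, iff_false]
    grind
  exact h5a _ (hempty ▸ h5c _ _ _ (h5c _ _ _ hA₂ hA₁) hpair)

theorem stmt7 {W : Type*} [Fintype W] (ob : Set W → Set (Set W)) (A : Set W) (a₁ a₂ : W)
    (h5a : ∀ X : Set W, ∅ ∉ ob X)
    (h5c : ∀ X Y Z : Set W, Y ∈ ob X → Z ∈ ob X → Y ∩ Z ∈ ob X)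
    (h5d : ∀ X Y Z : Set W, Y ⊆ X → X ⊆ Z → Y ∈ ob X → (Z \ X) ∪ Y ∈ ob Z)
    (h5e : ∀ X Y Z : Set W, Y ⊆ X → Z ∈ ob X → Y ∩ Z ≠ ∅ → Z ∈ ob Y)
    (hne : a₁ ≠ a₂) (h1 : a₁ ∉ A) (h2 : a₂ ∉ A)
    (hpair : ({a₁, a₂} : Set W) ∈ ob {a₁, a₂}) :
    ¬ (∀ X : Set W, A ⊆ X → A ∈ ob X) :=
  stmt7_general ob A a₁ a₂ h5a h5c h5d h5e hne h1 h2 hpair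
end

section
/- Assume ob satisfies all axioms 5(a), 5(b), 5(c) (strong), 5(d), 5(e). If a₁ ∉ A, a₂ ∉ A and a₁ ≠ a₂, then it is not the case that A ∈ ob X for every X with A ⊆ X. -/
/-! Moving from `A ∪ {a₁}` up to `A ∪ {a₁, a₂}` with 5(d) and back down to `{a₁, a₂}` with 5(e)
makes `A ∪ {a₂}` obligatory in context `{a₁, a₂}`; symmetrically so is `A ∪ {a₁}`. By 5(c) their
intersection `A` is obligatory there too, but `A` misses `{a₁, a₂}`, so 5(b) turns this into
`∅ ∈ ob {a₁, a₂}`, against 5(a). -/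

section Obligation

variable {W : Type*} {ob : Set W → Set (Set W)}

theorem not_mem_ob_of_inter_eq_empty (h5a : ∀ X : Set W, ∅ ∉ ob X)
    (h5b : ∀ X Y Z : Set W, Y ∩ X = Z ∩ X → (Y ∈ ob X ↔ Z ∈ ob X))
    {X Y : Set W} (h : Y ∩ X = ∅) : Y ∉ ob X := by
  rw [h5b X Y ∅ (by rw [h, Set.empty_inter])]
  exact h5a X

theorem insert_mem_ob_of_mem_ob_insert
    (h5d : ∀ X Y Z : Set W, Y ⊆ X → X ⊆ Z → Y ∈ ob X → (Z \ X) ∪ Y ∈ ob Z)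
    {A : Set W} {a b : W} (hab : a ≠ b) (h : A ∈ ob (insert a A)) :
    insert b A ∈ ob (insert a (insert b A)) := by
  have key := h5d _ _ (insert a (insert b A)) (Set.subset_insert a A)
    (Set.insert_subset_insert (Set.subset_insert b A)) h
  convert key using 1
  ext x
  simp only [Set.mem_insert_iff, Set.mem_union, Set.mem_sdiff]
  grind

theorem insert_mem_ob_pair
    (h5d : ∀ X Y Z : Set W, Y ⊆ X → X ⊆ Z → Y ∈ ob X → (Z \ X) ∪ Y ∈ ob Z)
    (h5e : ∀ X Y Z : Set W, Y ⊆ X → Z ∈ ob X → Y ∩ Z ≠ ∅ → Z ∈ ob Y)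
    {A : Set W} {a b : W} (hab : a ≠ b) (h : A ∈ ob (insert a A)) :
    insert b A ∈ ob {a, b} := by
  refine h5e _ _ _ ?_ (insert_mem_ob_of_mem_ob_insert h5d hab h) ?_
  · exact Set.insert_subset_insert (Set.singleton_subset_iff.2 (Set.mem_insert b A))
  · exact Set.nonempty_iff_ne_empty.1 ⟨b, by simp⟩

end Obligation

theorem stmt8_general {W : Type*} (ob : Set W → Set (Set W)) (A : Set W) (a₁ a₂ : W)
    (h5a : ∀ X : Set W, ∅ ∉ ob X)
    (h5b : ∀ X Y Z : Set W, Y ∩ X = Z ∩ X → (Y ∈ ob X ↔ Z ∈ ob X))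
    (h5c : ∀ X Y Z : Set W, Y ∈ ob X → Z ∈ ob X → Y ∩ Z ∈ ob X)
    (h5d : ∀ X Y Z : Set W, Y ⊆ X → X ⊆ Z → Y ∈ ob X → (Z \ X) ∪ Y ∈ ob Z)
    (h5e : ∀ X Y Z : Set W, Y ⊆ X → Z ∈ ob X → Y ∩ Z ≠ ∅ → Z ∈ ob Y)
    (h1 : a₁ ∉ A) (h2 : a₂ ∉ A) (hne : a₁ ≠ a₂) :
    ¬ (∀ X : Set W, A ⊆ X → A ∈ ob X) := by
  intro h
  have h₂ : insert a₂ A ∈ ob {a₁, a₂} :=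
    insert_mem_ob_pair h5d h5e hne (h _ (Set.subset_insert a₁ A))
  have h₁ : insert a₁ A ∈ ob {a₁, a₂} := by
    rw [Set.pair_comm]
    exact insert_mem_ob_pair h5d h5e hne.symm (h _ (Set.subset_insert a₂ A))
  refine not_mem_ob_of_inter_eq_empty h5a h5b ?_ (h5c _ _ _ h₂ h₁)
  ext x
  simp only [Set.mem_inter_iff, Set.mem_insert_iff, Set.mem_singleton_iff,
    Set.mem_empty_iff_false, iff_false]
  grind

theorem stmt8 {W : Type*} [Fintype W] (ob : Set W → Set (Set W)) (A : Set W) (a₁ a₂ : W)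
    (h5a : ∀ X : Set W, ∅ ∉ ob X)
    (h5b : ∀ X Y Z : Set W, Y ∩ X = Z ∩ X → (Y ∈ ob X ↔ Z ∈ ob X))
    (h5c : ∀ X Y Z : Set W, Y ∈ ob X → Z ∈ ob X → Y ∩ Z ∈ ob X)
    (h5d : ∀ X Y Z : Set W, Y ⊆ X → X ⊆ Z → Y ∈ ob X → (Z \ X) ∪ Y ∈ ob Z)
    (h5e : ∀ X Y Z : Set W, Y ⊆ X → Z ∈ ob X → Y ∩ Z ≠ ∅ → Z ∈ ob Y)
    (h1 : a₁ ∉ A) (h2 : a₂ ∉ A) (hne : a₁ ≠ a₂) :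
    ¬ (∀ X : Set W, A ⊆ X → A ∈ ob X) :=
  stmt8_general ob A a₁ a₂ h5a h5b h5c h5d h5e h1 h2 hne
end

section
/- Assume ob satisfies axioms 5(b), 5(d), 5(e). If a is bad (i.e., there exists X with a ∈ X and X \ {a} ∈ ob X) and Y \ {a} ≠ ∅, then Y \ {a} ∈ ob Y. -/
/-! Badness of `a` is witnessed on one context `X`; axiom 5(d) enlarges it to the whole space,
giving `{a}ᶜ ∈ ob univ`. Axiom 5(e) then restricts this to any `Y` meeting `{a}ᶜ`, and by
5(b) only the trace `Y \ {a}` of `{a}ᶜ` on `Y` matters. -/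

section

variable {W : Type*} {ob : Set W → Set (Set W)}

theorem compl_singleton_mem_ob_univ
    (h5d : ∀ X Y Z : Set W, Y ⊆ X → X ⊆ Z → Y ∈ ob X → (Z \ X) ∪ Y ∈ ob Z)
    {a : W} {X : Set W} (haX : a ∈ X) (hX : X \ {a} ∈ ob X) :
    {a}ᶜ ∈ ob Set.univ := by
  have h := h5d X (X \ {a}) Set.univ Set.sdiff_subset (Set.subset_univ X) hX
  rwa [Set.sdiff_union_sdiff_cancel (Set.subset_univ X) (Set.singleton_subset_iff.2 haX),
    ← Set.compl_eq_univ_sdiff] at h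

theorem mem_ob_iff_inter_mem_ob
    (h5b : ∀ X Y Z : Set W, Y ∩ X = Z ∩ X → (Y ∈ ob X ↔ Z ∈ ob X)) (X Z : Set W) :
    Z ∈ ob X ↔ X ∩ Z ∈ ob X :=
  h5b X Z (X ∩ Z) (by rw [Set.inter_eq_left.2 Set.inter_subset_left, Set.inter_comm])

end

theorem stmt9_general {W : Type*} (ob : Set W → Set (Set W)) (a : W)
    (h5b : ∀ X Y Z : Set W, Y ∩ X = Z ∩ X → (Y ∈ ob X ↔ Z ∈ ob X))
    (h5d : ∀ X Y Z : Set W, Y ⊆ X → X ⊆ Z → Y ∈ ob X → (Z \ X) ∪ Y ∈ ob Z)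
    (h5e : ∀ X Y Z : Set W, Y ⊆ X → Z ∈ ob X → Y ∩ Z ≠ ∅ → Z ∈ ob Y)
    (hbad : ∃ X : Set W, a ∈ X ∧ X \ {a} ∈ ob X)
    (Y : Set W) (hY : Y \ {a} ≠ ∅) :
    Y \ {a} ∈ ob Y := by
  obtain ⟨X, haX, hX⟩ := hbad
  have huniv := compl_singleton_mem_ob_univ h5d haX hX
  rw [Set.sdiff_eq] at hY ⊢
  have hYcompl : {a}ᶜ ∈ ob Y := h5e Set.univ Y {a}ᶜ (Set.subset_univ Y) huniv hY
  exact (mem_ob_iff_inter_mem_ob h5b Y {a}ᶜ).1 hYcompl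

theorem stmt9 {W : Type*} [Fintype W] (ob : Set W → Set (Set W)) (a : W)
    (h5b : ∀ X Y Z : Set W, Y ∩ X = Z ∩ X → (Y ∈ ob X ↔ Z ∈ ob X))
    (h5d : ∀ X Y Z : Set W, Y ⊆ X → X ⊆ Z → Y ∈ ob X → (Z \ X) ∪ Y ∈ ob Z)
    (h5e : ∀ X Y Z : Set W, Y ⊆ X → Z ∈ ob X → Y ∩ Z ≠ ∅ → Z ∈ ob Y)
    (hbad : ∃ X : Set W, a ∈ X ∧ X \ {a} ∈ ob X)
    (Y : Set W) (hY : Y \ {a} ≠ ∅) :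
    Y \ {a} ∈ ob Y :=
  stmt9_general ob a h5b h5d h5e hbad Y hY
end

section
/- Assume ob satisfies axioms 5(b), 5(d), 5(e). If X ∈ ob X for some set X and Y ≠ ∅, then Y ∈ ob Y. -/
theorem stmt10_general {W : Type*} (ob : Set W → Set (Set W))
    (h5b : ∀ X Y Z : Set W, Y ∩ X = Z ∩ X → (Y ∈ ob X ↔ Z ∈ ob X))
    (h5d : ∀ X Y Z : Set W, Y ⊆ X → X ⊆ Z → Y ∈ ob X → (Z \ X) ∪ Y ∈ ob Z)
    (h5e : ∀ X Y Z : Set W, Y ⊆ X → Z ∈ ob X → Y ∩ Z ≠ ∅ → Z ∈ ob Y)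
    (X Y : Set W) (hX : X ∈ ob X) (hY : Y ≠ ∅) :
    Y ∈ ob Y := by
  have huniv : Set.univ ∈ ob Set.univ := by
    simpa using h5d X X Set.univ subset_rfl (Set.subset_univ X) hX
  have huniv_Y : Set.univ ∈ ob Y :=
    h5e Set.univ Y Set.univ (Set.subset_univ Y) huniv (by simpa using hY)
  exact (h5b Y Set.univ Y (by simp)).mp huniv_Y

theorem stmt10 {W : Type*} [Fintype W] (ob : Set W → Set (Set W))
    (h5b : ∀ X Y Z : Set W, Y ∩ X = Z ∩ X → (Y ∈ ob X ↔ Z ∈ ob X))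
    (h5d : ∀ X Y Z : Set W, Y ⊆ X → X ⊆ Z → Y ∈ ob X → (Z \ X) ∪ Y ∈ ob Z)
    (h5e : ∀ X Y Z : Set W, Y ⊆ X → Z ∈ ob X → Y ∩ Z ≠ ∅ → Z ∈ ob Y)
    (X Y : Set W) (hX : X ∈ ob X) (hY : Y ≠ ∅) :
    Y ∈ ob Y :=
  stmt10_general ob h5b h5d h5e X Y hX hY
end

section
/- Assume ob satisfies axioms 5(b), 5(d), 5(e). If X \ {a} ≠ ∅ and X \ {a} ∈ ob X, then X ∈ ob X. -/
theorem mem_ob_self_of_subset_mem_ob {W : Type*} {ob : Set W → Set (Set W)}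
    (h5d : ∀ X Y Z : Set W, Y ⊆ X → X ⊆ Z → Y ∈ ob X → (Z \ X) ∪ Y ∈ ob Z)
    (h5e : ∀ X Y Z : Set W, Y ⊆ X → Z ∈ ob X → Y ∩ Z ≠ ∅ → Z ∈ ob Y)
    {X Y : Set W} (hYX : Y ⊆ X) (hY : Y.Nonempty) (hob : Y ∈ ob X) :
    X ∈ ob X := by
  have hYY : Y ∈ ob Y :=
    h5e X Y Y hYX hob (by rwa [Set.inter_self, ← Set.nonempty_iff_ne_empty])
  simpa only [Set.sdiff_union_of_subset hYX] using h5d Y Y X subset_rfl hYX hYY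

theorem stmt11_general {W : Type*} (ob : Set W → Set (Set W)) (a : W) (X : Set W)
    (h5d : ∀ X Y Z : Set W, Y ⊆ X → X ⊆ Z → Y ∈ ob X → (Z \ X) ∪ Y ∈ ob Z)
    (h5e : ∀ X Y Z : Set W, Y ⊆ X → Z ∈ ob X → Y ∩ Z ≠ ∅ → Z ∈ ob Y)
    (hne : X \ {a} ≠ ∅) (hob : X \ {a} ∈ ob X) :
    X ∈ ob X :=
  mem_ob_self_of_subset_mem_ob h5d h5e Set.sdiff_subset (Set.nonempty_iff_ne_empty.mpr hne) hob

theorem stmt11 {W : Type*} [Fintype W] (ob : Set W → Set (Set W)) (a : W) (X : Set W)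
    (h5b : ∀ X Y Z : Set W, Y ∩ X = Z ∩ X → (Y ∈ ob X ↔ Z ∈ ob X))
    (h5d : ∀ X Y Z : Set W, Y ⊆ X → X ⊆ Z → Y ∈ ob X → (Z \ X) ∪ Y ∈ ob Z)
    (h5e : ∀ X Y Z : Set W, Y ⊆ X → Z ∈ ob X → Y ∩ Z ≠ ∅ → Z ∈ ob Y)
    (hne : X \ {a} ≠ ∅) (hob : X \ {a} ∈ ob X) :
    X ∈ ob X :=
  stmt11_general ob a X h5d h5e hne hob
end

section
/- Assume ob satisfies axioms 5(a), 5(d), 5(e). If Set.univ \ {a} ∈ ob Set.univ, then Set.univ ∈ ob Set.univ. -/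
theorem self_mem_ob_of_subset_of_mem {W : Type*} {ob : Set W → Set (Set W)}
    (h5a : ∀ X : Set W, ∅ ∉ ob X)
    (h5d : ∀ X Y Z : Set W, Y ⊆ X → X ⊆ Z → Y ∈ ob X → (Z \ X) ∪ Y ∈ ob Z)
    (h5e : ∀ X Y Z : Set W, Y ⊆ X → Z ∈ ob X → Y ∩ Z ≠ ∅ → Z ∈ ob Y)
    {X Y : Set W} (hYX : Y ⊆ X) (hY : Y ∈ ob X) : X ∈ ob X := by
  have hY_ne : Y ≠ ∅ := fun h => h5a X (h ▸ hY)
  have hYY : Y ∈ ob Y := h5e X Y Y hYX hY (by rwa [Set.inter_self])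
  simpa only [Set.sdiff_union_of_subset hYX] using h5d Y Y X subset_rfl hYX hYY

theorem stmt12_general {W : Type*} (ob : Set W → Set (Set W)) (a : W)
    (h5a : ∀ X : Set W, ∅ ∉ ob X)
    (h5d : ∀ X Y Z : Set W, Y ⊆ X → X ⊆ Z → Y ∈ ob X → (Z \ X) ∪ Y ∈ ob Z)
    (h5e : ∀ X Y Z : Set W, Y ⊆ X → Z ∈ ob X → Y ∩ Z ≠ ∅ → Z ∈ ob Y)
    (h : Set.univ \ {a} ∈ ob Set.univ) :
    (Set.univ : Set W) ∈ ob Set.univ :=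
  self_mem_ob_of_subset_of_mem h5a h5d h5e (Set.subset_univ _) h

theorem stmt12 {W : Type*} [Fintype W] (ob : Set W → Set (Set W)) (a : W)
    (h5a : ∀ X : Set W, ∅ ∉ ob X)
    (h5d : ∀ X Y Z : Set W, Y ⊆ X → X ⊆ Z → Y ∈ ob X → (Z \ X) ∪ Y ∈ ob Z)
    (h5e : ∀ X Y Z : Set W, Y ⊆ X → Z ∈ ob X → Y ∩ Z ≠ ∅ → Z ∈ ob Y)
    (h : Set.univ \ {a} ∈ ob Set.univ) :
    (Set.univ : Set W) ∈ ob Set.univ :=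
  stmt12_general ob a h5a h5d h5e h
end

section
/- Assume ob satisfies axioms 5(a), 5(b), 5(d), 5(e). If a is bad (∃ X, a ∈ X ∧ X \ {a} ∈ ob X), then {a} ∈ ob {a}. -/
/-! Start from an obligation `Y ∈ ob X` with `Y ⊆ X`, here `Y = X \ {a}`. By 5(a) `Y` is nonempty,
so 5(e) restricts the obligation to the context `Y` itself.
Enlarging the context to `univ` with 5(d) gives `univ ∈ ob univ`, restricting it again with 5(e)
gives `univ ∈ ob {a}`, and 5(b) replaces `univ` by its trace `{a}` on the context. -/

open Set

section

variable {W : Type*} {ob : Set W → Set (Set W)}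

theorem self_mem_ob_of_subset (h5a : ∀ X : Set W, ∅ ∉ ob X)
    (h5e : ∀ X Y Z : Set W, Y ⊆ X → Z ∈ ob X → Y ∩ Z ≠ ∅ → Z ∈ ob Y)
    {X Y : Set W} (hYX : Y ⊆ X) (hY : Y ∈ ob X) : Y ∈ ob Y := by
  refine h5e X Y Y hYX hY ?_
  rw [inter_self]
  rintro rfl
  exact h5a X hY

theorem univ_mem_ob_univ_of_self_mem_ob
    (h5d : ∀ X Y Z : Set W, Y ⊆ X → X ⊆ Z → Y ∈ ob X → (Z \ X) ∪ Y ∈ ob Z)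
    {X : Set W} (hX : X ∈ ob X) : (univ : Set W) ∈ ob univ := by
  simpa using h5d X X univ subset_rfl (subset_univ X) hX

theorem univ_mem_ob_of_univ_mem_ob_univ
    (h5e : ∀ X Y Z : Set W, Y ⊆ X → Z ∈ ob X → Y ∩ Z ≠ ∅ → Z ∈ ob Y)
    (huniv : (univ : Set W) ∈ ob univ) {Y : Set W} (hY : Y.Nonempty) : (univ : Set W) ∈ ob Y :=
  h5e univ Y univ (subset_univ Y) huniv (by rw [inter_univ]; exact hY.ne_empty)

theorem self_mem_ob_of_univ_mem_ob
    (h5b : ∀ X Y Z : Set W, Y ∩ X = Z ∩ X → (Y ∈ ob X ↔ Z ∈ ob X))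
    {X : Set W} (hX : (univ : Set W) ∈ ob X) : X ∈ ob X :=
  (h5b X univ X (by simp)).mp hX

end

theorem stmt13_general {W : Type*} (ob : Set W → Set (Set W)) (a : W)
    (h5a : ∀ X : Set W, ∅ ∉ ob X)
    (h5b : ∀ X Y Z : Set W, Y ∩ X = Z ∩ X → (Y ∈ ob X ↔ Z ∈ ob X))
    (h5d : ∀ X Y Z : Set W, Y ⊆ X → X ⊆ Z → Y ∈ ob X → (Z \ X) ∪ Y ∈ ob Z)
    (h5e : ∀ X Y Z : Set W, Y ⊆ X → Z ∈ ob X → Y ∩ Z ≠ ∅ → Z ∈ ob Y)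
    (hbad : ∃ X : Set W, a ∈ X ∧ X \ {a} ∈ ob X) :
    ({a} : Set W) ∈ ob {a} := by
  obtain ⟨X, -, hob⟩ := hbad
  have hself := self_mem_ob_of_subset h5a h5e sdiff_subset hob
  have huniv := univ_mem_ob_univ_of_self_mem_ob h5d hself
  exact self_mem_ob_of_univ_mem_ob h5b
    (univ_mem_ob_of_univ_mem_ob_univ h5e huniv (singleton_nonempty a))

theorem stmt13 {W : Type*} [Fintype W] (ob : Set W → Set (Set W)) (a : W)
    (h5a : ∀ X : Set W, ∅ ∉ ob X)
    (h5b : ∀ X Y Z : Set W, Y ∩ X = Z ∩ X → (Y ∈ ob X ↔ Z ∈ ob X))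
    (h5d : ∀ X Y Z : Set W, Y ⊆ X → X ⊆ Z → Y ∈ ob X → (Z \ X) ∪ Y ∈ ob Z)
    (h5e : ∀ X Y Z : Set W, Y ⊆ X → Z ∈ ob X → Y ∩ Z ≠ ∅ → Z ∈ ob Y)
    (hbad : ∃ X : Set W, a ∈ X ∧ X \ {a} ∈ ob X) :
    ({a} : Set W) ∈ ob {a} :=
  stmt13_general ob a h5a h5b h5d h5e hbad
end

section
/- Global-to-local principle: Assume ob satisfies axioms 5(a), 5(d), 5(e). Suppose that for every set A, if A ∈ ob X for all X ⊇ A, then (Set.univ \ A) has at most one element. Then for all B ⊆ C with B ∈ ob C, the set C \ B has at most one element. -/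
theorem mem_ob_of_subset_of_mem_ob {W : Type*} {ob : Set W → Set (Set W)}
    (h5a : ∀ X : Set W, ∅ ∉ ob X)
    (h5e : ∀ X Y Z : Set W, Y ⊆ X → Z ∈ ob X → Y ∩ Z ≠ ∅ → Z ∈ ob Y)
    {A X Y : Set W} (hYX : Y ⊆ X) (hAY : A ⊆ Y) (hA : A ∈ ob X) : A ∈ ob Y :=
  h5e X Y A hYX hA <| by
    rw [Set.inter_eq_self_of_subset_right hAY]
    rintro rfl
    exact h5a X hA

theorem stmt14_general {W : Type*} (ob : Set W → Set (Set W))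
    (h5a : ∀ X : Set W, ∅ ∉ ob X)
    (h5d : ∀ X Y Z : Set W, Y ⊆ X → X ⊆ Z → Y ∈ ob X → (Z \ X) ∪ Y ∈ ob Z)
    (h5e : ∀ X Y Z : Set W, Y ⊆ X → Z ∈ ob X → Y ∩ Z ≠ ∅ → Z ∈ ob Y)
    (hglobal : ∀ A : Set W, (∀ X : Set W, A ⊆ X → A ∈ ob X) → (Set.univ \ A).Subsingleton) :
    ∀ B C : Set W, B ⊆ C → B ∈ ob C → (C \ B).Subsingleton := by
  intro B C hBC hob
  have hextend : (Set.univ \ C) ∪ B ∈ ob Set.univ := h5d C B Set.univ hBC (Set.subset_univ C) hob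
  have hcompl : Set.univ \ ((Set.univ \ C) ∪ B) = C \ B := by
    rw [← Set.sdiff_sdiff, Set.sdiff_sdiff_cancel_left (Set.subset_univ C)]
  rw [← hcompl]
  exact hglobal _ fun X hX =>
    mem_ob_of_subset_of_mem_ob h5a h5e (Set.subset_univ X) hX hextend

theorem stmt14 {W : Type*} [Fintype W] (ob : Set W → Set (Set W))
    (h5a : ∀ X : Set W, ∅ ∉ ob X)
    (h5d : ∀ X Y Z : Set W, Y ⊆ X → X ⊆ Z → Y ∈ ob X → (Z \ X) ∪ Y ∈ ob Z)
    (h5e : ∀ X Y Z : Set W, Y ⊆ X → Z ∈ ob X → Y ∩ Z ≠ ∅ → Z ∈ ob Y)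
    (hglobal : ∀ A : Set W, (∀ X : Set W, A ⊆ X → A ∈ ob X) → (Set.univ \ A).Subsingleton) :
    ∀ B C : Set W, B ⊆ C → B ∈ ob C → (C \ B).Subsingleton :=
  stmt14_general ob h5a h5d h5e hglobal
end

section
/- Assume ob satisfies all axioms 5(a), 5(b), 5(c) (strong), 5(d), 5(e). For all B and C, if B ⊆ C and B ∈ ob C, then C \ B has at most one element. -/
/-! If `x ≠ y` both lie in `C \ B`, then relativising `B` to `B ∪ {x}` and extending back to `C`
(axioms 5(e) and 5(d)) shows `C \ {x} ∈ ob C`, and likewise `C \ {y} ∈ ob C`. Relativised to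
`{x, y}` both sets stay obligatory, yet their intersection misses `{x, y}` entirely, so 5(c) and
5(b) would make `∅` obligatory there, against 5(a). -/

namespace Obligation

variable {W : Type*} {ob : Set W → Set (Set W)}

theorem inter_nonempty_of_mem (h5a : ∀ X : Set W, ∅ ∉ ob X)
    (h5b : ∀ X Y Z : Set W, Y ∩ X = Z ∩ X → (Y ∈ ob X ↔ Z ∈ ob X))
    {X Y : Set W} (hY : Y ∈ ob X) : (Y ∩ X).Nonempty := by
  rw [Set.nonempty_iff_ne_empty]
  intro h
  exact h5a X ((h5b X Y ∅ (by rw [h, Set.empty_inter])).mp hY)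

theorem diff_singleton_mem (h5a : ∀ X : Set W, ∅ ∉ ob X)
    (h5d : ∀ X Y Z : Set W, Y ⊆ X → X ⊆ Z → Y ∈ ob X → (Z \ X) ∪ Y ∈ ob Z)
    (h5e : ∀ X Y Z : Set W, Y ⊆ X → Z ∈ ob X → Y ∩ Z ≠ ∅ → Z ∈ ob Y)
    {B C : Set W} (hBC : B ⊆ C) (hB : B ∈ ob C) {x : W} (hx : x ∈ C \ B) :
    C \ {x} ∈ ob C := by
  have hxBC : insert x B ⊆ C := Set.insert_subset hx.1 hBC
  have hB_ne : insert x B ∩ B ≠ ∅ := by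
    rw [Set.inter_eq_right.mpr (Set.subset_insert x B)]
    rintro rfl
    exact h5a C hB
  have hBx : B ∈ ob (insert x B) := h5e C (insert x B) B hxBC hB hB_ne
  have hCx : C \ insert x B ∪ B = C \ {x} := by
    ext z
    by_cases hzB : z ∈ B
    · simp [hzB, hBC hzB, ne_of_mem_of_not_mem hzB hx.2]
    · simp [hzB]
  exact hCx ▸ h5d (insert x B) B C (Set.subset_insert x B) hxBC hBx

end Obligation

open Obligation in
theorem stmt16_general {W : Type*} (ob : Set W → Set (Set W))
    (h5a : ∀ X : Set W, ∅ ∉ ob X)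
    (h5b : ∀ X Y Z : Set W, Y ∩ X = Z ∩ X → (Y ∈ ob X ↔ Z ∈ ob X))
    (h5c : ∀ X Y Z : Set W, Y ∈ ob X → Z ∈ ob X → Y ∩ Z ∈ ob X)
    (h5d : ∀ X Y Z : Set W, Y ⊆ X → X ⊆ Z → Y ∈ ob X → (Z \ X) ∪ Y ∈ ob Z)
    (h5e : ∀ X Y Z : Set W, Y ⊆ X → Z ∈ ob X → Y ∩ Z ≠ ∅ → Z ∈ ob Y) :
    ∀ B C : Set W, B ⊆ C → B ∈ ob C → (C \ B).Subsingleton := by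
  intro B C hBC hB x hx y hy
  by_contra hxy
  have hpair : {x, y} ⊆ C := Set.insert_subset hx.1 (Set.singleton_subset_iff.mpr hy.1)
  have hx_pair : C \ {x} ∈ ob {x, y} := by
    refine h5e C _ _ hpair (diff_singleton_mem h5a h5d h5e hBC hB hx) ?_
    exact Set.nonempty_iff_ne_empty.mp ⟨y, by simp [hy.1, Ne.symm hxy]⟩
  have hy_pair : C \ {y} ∈ ob {x, y} := by
    refine h5e C _ _ hpair (diff_singleton_mem h5a h5d h5e hBC hB hy) ?_
    exact Set.nonempty_iff_ne_empty.mp ⟨x, by simp [hx.1, hxy]⟩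
  obtain ⟨z, ⟨hzx, hzy⟩, hz⟩ := inter_nonempty_of_mem h5a h5b (h5c _ _ _ hx_pair hy_pair)
  rcases hz with rfl | rfl
  exacts [hzx.2 rfl, hzy.2 rfl]

theorem stmt16 {W : Type*} [Fintype W] (ob : Set W → Set (Set W))
    (h5a : ∀ X : Set W, ∅ ∉ ob X)
    (h5b : ∀ X Y Z : Set W, Y ∩ X = Z ∩ X → (Y ∈ ob X ↔ Z ∈ ob X))
    (h5c : ∀ X Y Z : Set W, Y ∈ ob X → Z ∈ ob X → Y ∩ Z ∈ ob X)
    (h5d : ∀ X Y Z : Set W, Y ⊆ X → X ⊆ Z → Y ∈ ob X → (Z \ X) ∪ Y ∈ ob Z)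
    (h5e : ∀ X Y Z : Set W, Y ⊆ X → Z ∈ ob X → Y ∩ Z ≠ ∅ → Z ∈ ob Y) :
    ∀ B C : Set W, B ⊆ C → B ∈ ob C → (C \ B).Subsingleton :=
  stmt16_general ob h5a h5b h5c h5d h5e
end

section
/- Quasibad implies bad: Assume ob satisfies axioms 5(a), 5(b), 5(e). If a world a is quasibad (∃ X Y, a ∈ X \ Y ∧ Y ∈ ob X), then a is bad (∃ X, a ∈ X ∧ X \ {a} ∈ ob X). -/
/-!
Shrink the witness `X` of quasibadness to `X' = insert a (Y ∩ X)`. Axiom 5(e) moves `Y` into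
`ob X'` (the overlap `Y ∩ X'` is nonempty because, by 5(a) and 5(b), `Y ∩ X` is), and inside `X'`
the sets `Y` and `X' \ {a}` agree, so 5(b) gives `X' \ {a} ∈ ob X'`.
-/

namespace Set

variable {W : Type*}

theorem inter_nonempty_of_mem_ob {ob : Set W → Set (Set W)} (h5a : ∀ X : Set W, ∅ ∉ ob X)
    (h5b : ∀ X Y Z : Set W, Y ∩ X = Z ∩ X → (Y ∈ ob X ↔ Z ∈ ob X))
    {X Y : Set W} (hY : Y ∈ ob X) : (Y ∩ X).Nonempty := by
  rw [nonempty_iff_ne_empty]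
  intro h
  exact h5a X ((h5b X ∅ Y (by rw [h, empty_inter])).mpr hY)

theorem inter_insert_inter_eq_diff_inter {a : W} {X Y : Set W} (ha : a ∉ Y) :
    Y ∩ insert a (Y ∩ X) = (insert a (Y ∩ X) \ {a}) ∩ insert a (Y ∩ X) := by
  ext x
  by_cases hx : x = a
  · subst hx
    simp [ha]
  · simp [hx]

end Set

open Set in
theorem stmt19_general {W : Type*} (ob : Set W → Set (Set W)) (a : W)
    (h5a : ∀ X : Set W, ∅ ∉ ob X)
    (h5b : ∀ X Y Z : Set W, Y ∩ X = Z ∩ X → (Y ∈ ob X ↔ Z ∈ ob X))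
    (h5e : ∀ X Y Z : Set W, Y ⊆ X → Z ∈ ob X → Y ∩ Z ≠ ∅ → Z ∈ ob Y)
    (hqb : ∃ X Y : Set W, a ∈ X \ Y ∧ Y ∈ ob X) :
    ∃ X : Set W, a ∈ X ∧ X \ {a} ∈ ob X := by
  obtain ⟨X, Y, ⟨haX, haY⟩, hY⟩ := hqb
  set X' := insert a (Y ∩ X)
  have hX'X : X' ⊆ X := insert_subset haX inter_subset_right
  have hX'Y : X' ∩ Y ≠ ∅ := by
    rw [← nonempty_iff_ne_empty]
    exact (inter_nonempty_of_mem_ob h5a h5b hY).mono fun x hx => ⟨Or.inr hx, hx.1⟩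
  have hYX' : Y ∈ ob X' := h5e X X' Y hX'X hY hX'Y
  exact ⟨X', mem_insert a _, (h5b X' Y _ (inter_insert_inter_eq_diff_inter haY)).mp hYX'⟩

theorem stmt19 {W : Type*} [Fintype W] (ob : Set W → Set (Set W)) (a : W)
    (h5a : ∀ X : Set W, ∅ ∉ ob X)
    (h5b : ∀ X Y Z : Set W, Y ∩ X = Z ∩ X → (Y ∈ ob X ↔ Z ∈ ob X))
    (h5e : ∀ X Y Z : Set W, Y ⊆ X → Z ∈ ob X → Y ∩ Z ≠ ∅ → Z ∈ ob Y)
    (hqb : ∃ X Y : Set W, a ∈ X \ Y ∧ Y ∈ ob X) :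
    ∃ X : Set W, a ∈ X ∧ X \ {a} ∈ ob X :=
  stmt19_general ob a h5a h5b h5e hqb
end
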